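/- Under scenario S_dd with p = 1/2 and β ∈ [0,1), the BDe limiting expected log posterior ratio equals ((1+β)/2)·log(1+β) + ((1−β)/2)·log(1−β), which is bounded above by log 2, whereas the BGe limiting ratio (1/2)·log(1/(1−β²)) is unbounded as β → 1⁻. -/

import Mathlib

/-!
The BDe limit is the mutual information of the two binary variables, which is
`log 2 - binEntropy ((1 + β) / 2)` and hence at most `log 2` because binary entropy is
nonnegative. The BGe limit is `-(1/2) · log (1 - β²)`, and `1 - β² → 0⁺` as `β → 1⁻`.
-/

open Real Filter

open scoped Topology

lemma binEntropy_one_add_div_two {β : ℝ} (hβ₀ : -1 < β) (hβ₁ : β < 1) :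
    binEntropy ((1 + β) / 2) =
      log 2 - ((1 + β) / 2 * log (1 + β) + (1 - β) / 2 * log (1 - β)) := by
  have hsub : 1 - (1 + β) / 2 = (1 - β) / 2 := by ring
  rw [binEntropy, hsub, inv_div, inv_div, log_div two_ne_zero (by linarith),
    log_div two_ne_zero (by linarith)]
  ring

lemma one_add_div_two_mul_log_add_le_log_two {β : ℝ} (hβ₀ : -1 < β) (hβ₁ : β < 1) :
    (1 + β) / 2 * log (1 + β) + (1 - β) / 2 * log (1 - β) ≤ log 2 := by
  have := binEntropy_nonneg (p := (1 + β) / 2) (by linarith) (by linarith)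
  rw [binEntropy_one_add_div_two hβ₀ hβ₁] at this
  linarith

lemma tendsto_one_sub_sq_nhdsLT_one :
    Tendsto (fun β : ℝ => 1 - β ^ 2) (𝓝[<] 1) (𝓝[>] 0) := by
  refine tendsto_nhdsWithin_of_tendsto_nhds_of_eventually_within _ ?_ ?_
  · have : Tendsto (fun β : ℝ => 1 - β ^ 2) (𝓝 1) (𝓝 (1 - 1 ^ 2)) :=
      (by fun_prop : Continuous fun β : ℝ => 1 - β ^ 2).tendsto 1
    simpa using this.mono_left nhdsWithin_le_nhds
  · filter_upwards [Ioo_mem_nhdsLT (show (-1 : ℝ) < 1 by norm_num)] with β ⟨hβ₀, hβ₁⟩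
    show 0 < 1 - β ^ 2
    nlinarith

lemma tendsto_log_one_div_one_sub_sq_nhdsLT_one :
    Tendsto (fun β : ℝ => log (1 / (1 - β ^ 2))) (𝓝[<] 1) atTop := by
  simp only [one_div]
  exact tendsto_log_atTop.comp (tendsto_inv_nhdsGT_zero.comp tendsto_one_sub_sq_nhdsLT_one)

/-- Under `S_dd` with `p = 1/2` and `β ∈ [0,1)`: with cells `p11 = p00 = (1+β)/4`,
`p10 = p01 = (1−β)/4` and uniform marginals `1/2`, the BDe limiting expected log posterior
ratio equals `((1+β)/2)·log(1+β) + ((1−β)/2)·log(1−β)`, which is bounded above by `log 2`,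
whereas the BGe limiting ratio `(1/2)·log(1/(1−β²))` tends to `+∞` as `β → 1⁻`. -/
theorem stmt_10 :
    (∀ β : ℝ, 0 ≤ β → β < 1 →
      ((1 + β) / 4) * Real.log (((1 + β) / 4) / ((1 / 2) * (1 / 2))) +
        ((1 - β) / 4) * Real.log (((1 - β) / 4) / ((1 / 2) * (1 / 2))) +
        ((1 - β) / 4) * Real.log (((1 - β) / 4) / ((1 / 2) * (1 / 2))) +
        ((1 + β) / 4) * Real.log (((1 + β) / 4) / ((1 / 2) * (1 / 2))) =
      ((1 + β) / 2) * Real.log (1 + β) + ((1 - β) / 2) * Real.log (1 - β)) ∧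
    (∀ β : ℝ, 0 ≤ β → β < 1 →
      ((1 + β) / 2) * Real.log (1 + β) + ((1 - β) / 2) * Real.log (1 - β) ≤ Real.log 2) ∧
    Tendsto (fun β : ℝ => (1 / 2) * Real.log (1 / (1 - β ^ 2)))
      (nhdsWithin 1 (Set.Iio 1)) atTop := by
  have hcell : ∀ x : ℝ, x / 4 / (1 / 2 * (1 / 2)) = x := fun x => by ring
  refine ⟨fun β _ _ => ?_, fun β hβ₀ hβ₁ => ?_, ?_⟩
  · simp only [hcell]
    ring
  · exact one_add_div_two_mul_log_add_le_log_two (by linarith) hβ₁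
  · exact tendsto_log_one_div_one_sub_sq_nhdsLT_one.const_mul_atTop one_half_pos
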